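/- arXiv:2105.04026 — 7 statements merged into one kernel-verified Lean document; each statement's English description precedes it below -/
import Mathlib

section
/- Let g : [0,1] → ℝ be the function g(x) = x − x², let I_n denote the piecewise linear interpolation of g at the 2^n + 1 equidistant points k·2^{-n}, k = 0, …, 2^n, and let h_k be the k-fold composition of the hat function h. Then for every n ≥ 1, I_n = Σ_{k=1}^n h_k / 2^{2k}, and consequently ‖g − I_n‖_{L^∞([0,1])} ≤ 2^{-2n-2}. -/
/-- The hat function on `[0,1]`. -/
noncomputable def hat (x : ℝ) : ℝ := if x ≤ 1/2 then 2 * x else 2 * (1 - x)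

/-!
With `g x = x - x ^ 2`, one checks `g = hat / 4 + g ∘ hat / 4`, and iterating gives
`g = ∑_{k ≤ n} hat^[k] / 4 ^ k + g ∘ hat^[n] / 4 ^ n`. On a dyadic interval `[p, q]` of
length `2⁻ⁿ`, `hat^[n]` is one of the two affine bijections onto `[0, 1]`, so
`g ∘ hat^[n] / 4 ^ n = (x - p) * (q - x)`; and this is exactly `g` minus its affine
interpolant at `p` and `q`, as both sides are quadratics with leading coefficient `-1`
vanishing at `p` and `q`. The error bound is `max g / 4 ^ n = 1 / 4 ^ (n + 1)`.
-/

open Set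

lemma hat_of_le {x : ℝ} (h : x ≤ 1/2) : hat x = 2 * x := if_pos h

lemma hat_of_ge {x : ℝ} (h : 1/2 ≤ x) : hat x = 2 - 2 * x := by
  unfold hat
  split_ifs with h'
  · rw [le_antisymm h' h]; norm_num
  · ring

lemma mapsTo_hat : MapsTo hat (Icc 0 1) (Icc 0 1) := by
  intro x ⟨hx0, hx1⟩
  rcases le_total x (1/2) with h | h
  · rw [hat_of_le h]; constructor <;> linarith
  · rw [hat_of_ge h]; constructor <;> linarith

lemma sub_sq_eq_hat_div_four_add (y : ℝ) :
    y - y ^ 2 = hat y / 4 + (hat y - hat y ^ 2) / 4 := by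
  unfold hat; split_ifs <;> ring

lemma sub_sq_eq_sum_iterate_hat (n : ℕ) (x : ℝ) :
    x - x ^ 2 = ∑ k ∈ Finset.Icc 1 n, hat^[k] x / 2 ^ (2 * k)
      + (hat^[n] x - (hat^[n] x) ^ 2) / 2 ^ (2 * n) := by
  induction n with
  | zero => simp
  | succ n ih =>
    rw [Finset.sum_Icc_succ_top (by omega), ih, Function.iterate_succ_apply']
    have hpow : (2 : ℝ) ^ (2 * (n + 1)) = 2 ^ (2 * n) * 4 := by ring
    rw [hpow]
    linear_combination sub_sq_eq_hat_div_four_add (hat^[n] x) / (2 : ℝ) ^ (2 * n)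

lemma iterate_hat_eq_or {n k : ℕ} (hk : k < 2 ^ n) {x : ℝ}
    (h₁ : k ≤ 2 ^ n * x) (h₂ : 2 ^ n * x ≤ k + 1) :
    hat^[n] x = 2 ^ n * x - k ∨ hat^[n] x = k + 1 - 2 ^ n * x := by
  induction n generalizing k x with
  | zero => simp [Nat.lt_one_iff.mp hk]
  | succ n ih =>
    rw [Function.iterate_succ_apply]
    rw [pow_succ] at hk h₁ h₂ ⊢
    have h2n : (0 : ℝ) < 2 ^ n := by positivity
    by_cases hlow : k < 2 ^ n
    · have hk' : (k : ℝ) + 1 ≤ 2 ^ n := by exact_mod_cast hlow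
      rw [hat_of_le (by nlinarith)]
      rcases ih hlow (x := 2 * x) (by linarith) (by linarith) with h | h
      · left; linarith
      · right; linarith
    · -- reflect: `k' = 2 ^ (n + 1) - 1 - k` indexes the interval containing `hat x = 2 - 2 * x`
      obtain ⟨k', hk'⟩ := Nat.exists_eq_add_of_lt hk
      have hk'lt : k' < 2 ^ n := by omega
      have hk'R : (2 : ℝ) ^ n * 2 = k + k' + 1 := by exact_mod_cast hk'
      have hk'low : (2 : ℝ) ^ n ≤ k := by exact_mod_cast not_lt.mp hlow
      rw [hat_of_ge (by nlinarith)]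
      rcases ih hk'lt (x := 2 - 2 * x) (by linarith) (by linarith) with h | h
      · right; linarith
      · left; linarith

lemma iterate_hat_sub_sq {n k : ℕ} (hk : k < 2 ^ n) {x : ℝ}
    (h₁ : k ≤ 2 ^ n * x) (h₂ : 2 ^ n * x ≤ k + 1) :
    hat^[n] x - (hat^[n] x) ^ 2 = (2 ^ n * x - k) * (k + 1 - 2 ^ n * x) := by
  rcases iterate_hat_eq_or hk h₁ h₂ with h | h <;> rw [h] <;> ring

lemma exists_nat_lt_le_mul_le {N : ℕ} (hN : 0 < N) {x : ℝ} (hx : x ∈ Icc 0 1) :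
    ∃ k < N, (k : ℝ) ≤ N * x ∧ N * x ≤ k + 1 := by
  have hNx : 0 ≤ (N : ℝ) * x := by have := hx.1; positivity
  rcases hx.2.lt_or_eq with hlt | rfl
  · refine ⟨⌊(N : ℝ) * x⌋₊, ?_, Nat.floor_le hNx, (Nat.lt_floor_add_one _).le⟩
    rw [Nat.floor_lt hNx]
    exact mul_lt_of_lt_one_right (by exact_mod_cast hN) hlt
  · exact ⟨N - 1, by omega, by simp [Nat.cast_pred hN], by simp [Nat.cast_pred hN]⟩

lemma eq_sub_sq_sub_mul_of_affine_interpolant {I : ℝ → ℝ} {p q : ℝ} (hpq : p < q)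
    (hp : I p = p - p ^ 2) (hq : I q = q - q ^ 2)
    (haffine : ∃ a b : ℝ, ∀ x ∈ Icc p q, I x = a * x + b) :
    ∀ x ∈ Icc p q, I x = x - x ^ 2 - (x - p) * (q - x) := by
  obtain ⟨a, b, hab⟩ := haffine
  have hp' : a * p + b = p - p ^ 2 := by rw [← hab p ⟨le_rfl, hpq.le⟩, hp]
  have hq' : a * q + b = q - q ^ 2 := by rw [← hab q ⟨hpq.le, le_rfl⟩, hq]
  have ha : a = 1 - p - q :=
    mul_right_cancel₀ (sub_ne_zero.mpr hpq.ne') (by linear_combination hq' - hp')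
  intro x hx
  rw [hab x hx]
  linear_combination hp' + (x - p) * ha

theorem interpolation_sum_of_sawtooths_general (n : ℕ) (I : ℝ → ℝ)
    (hinterp : ∀ k : ℕ, k ≤ 2 ^ n →
      I ((k : ℝ) / 2 ^ n) = (k : ℝ) / 2 ^ n - ((k : ℝ) / 2 ^ n) ^ 2)
    (haffine : ∀ k : ℕ, k < 2 ^ n → ∃ a b : ℝ,
      ∀ x ∈ Set.Icc ((k : ℝ) / 2 ^ n) (((k : ℝ) + 1) / 2 ^ n), I x = a * x + b) :
    (∀ x ∈ Set.Icc (0 : ℝ) 1, I x = ∑ k ∈ Finset.Icc 1 n, hat^[k] x / 2 ^ (2 * k)) ∧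
    (∀ x ∈ Set.Icc (0 : ℝ) 1, |(x - x ^ 2) - I x| ≤ 1 / 2 ^ (2 * n + 2)) := by
  have h2n : (0 : ℝ) < 2 ^ n := by positivity
  have hpow : (2 : ℝ) ^ (2 * n) = 2 ^ n * 2 ^ n := by ring
  have key : ∀ x ∈ Icc (0 : ℝ) 1,
      I x = x - x ^ 2 - (hat^[n] x - (hat^[n] x) ^ 2) / 2 ^ (2 * n) := by
    intro x hx
    obtain ⟨k, hk, h₁, h₂⟩ := exists_nat_lt_le_mul_le (N := 2 ^ n) (by positivity) hx
    push_cast at h₁ h₂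
    have hq := hinterp (k + 1) hk
    push_cast at hq
    rw [eq_sub_sq_sub_mul_of_affine_interpolant (by gcongr; linarith) (hinterp k hk.le) hq
      (haffine k hk) x ⟨by rwa [div_le_iff₀' h2n], by rwa [le_div_iff₀' h2n]⟩,
      iterate_hat_sub_sq hk h₁ h₂, hpow]
    field_simp
  refine ⟨fun x hx => ?_, fun x hx => ?_⟩
  · rw [key x hx, sub_sq_eq_sum_iterate_hat n x]
    ring
  · obtain ⟨hy0, hy1⟩ := (mapsTo_hat.iterate n) hx
    rw [key x hx, sub_sub_cancel, abs_of_nonneg (by apply div_nonneg <;> nlinarith),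
      div_le_div_iff₀ (by positivity) (by positivity)]
    have hpow' : (2 : ℝ) ^ (2 * n + 2) = 4 * 2 ^ (2 * n) := by ring
    nlinarith [sq_nonneg (hat^[n] x - 1/2), pow_pos h2n 2]

/-- Let `g(x) = x − x²` and let `I` be the piecewise linear interpolation of `g`
at the `2^n + 1` equidistant points `k·2^{-n}` (i.e. `I` agrees with `g` at these
points and is affine on each subinterval). Then `I = Σ_{k=1}^n h_k / 2^{2k}`,
where `h_k` is the `k`-fold composition of the hat function, and consequently
`‖g − I‖_{L^∞([0,1])} ≤ 2^{-2n-2}`. -/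
theorem interpolation_sum_of_sawtooths (n : ℕ) (hn : 1 ≤ n) (I : ℝ → ℝ)
    (hinterp : ∀ k : ℕ, k ≤ 2 ^ n →
      I ((k : ℝ) / 2 ^ n) = (k : ℝ) / 2 ^ n - ((k : ℝ) / 2 ^ n) ^ 2)
    (haffine : ∀ k : ℕ, k < 2 ^ n → ∃ a b : ℝ,
      ∀ x ∈ Set.Icc ((k : ℝ) / 2 ^ n) (((k : ℝ) + 1) / 2 ^ n), I x = a * x + b) :
    (∀ x ∈ Set.Icc (0 : ℝ) 1, I x = ∑ k ∈ Finset.Icc 1 n, hat^[k] x / 2 ^ (2 * k)) ∧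
    (∀ x ∈ Set.Icc (0 : ℝ) 1, |(x - x ^ 2) - I x| ≤ 1 / 2 ^ (2 * n + 2)) :=
  interpolation_sum_of_sawtooths_general n I hinterp haffine
end

section
/- Let ρ : ℝ → ℝ be p-times differentiable at a point λ ∈ ℝ with ρ^{(p)}(λ) ≠ 0, and let K ⊂ ℝ be compact. Then the rescaled p-th order central difference quotients of ρ converge uniformly on K to the monomial x ↦ x^p: sup_{x ∈ K} | Σ_{i=0}^p ((−1)^i · binom(p,i) / (h^p · ρ^{(p)}(λ))) · ρ((p/2 − i)·h·x + λ) − x^p | → 0 as h → 0⁺. -/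
open Filter Asymptotics Finset Topology
open scoped Nat fwdDiff

/-!
Write `ρ (λ + u) = T u + r u` with `T` the Taylor polynomial of degree `p` at `λ`, so that
`r u = o(uᵖ)` by Taylor's theorem. The `p`-th central difference with step `t` is, up to a shift,
the `p`-th forward difference, so it kills monomials of degree `< p` and sends `uᵖ` to `p! tᵖ`;
hence it sends `T` to `ρ⁽ᵖ⁾(λ) tᵖ`, while it sends `r` to `o(tᵖ)`. Taking `t = h x` and dividing
by `hᵖ ρ⁽ᵖ⁾(λ)` leaves `xᵖ` plus an error that is small uniformly for `x` in the bounded set `K`.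
-/

theorem sum_neg_one_pow_mul_choose_mul_sub_pow {R : Type*} [CommRing R] (p j : ℕ) (y : R) :
    ∑ i ∈ range (p + 1), (-1) ^ i * (p.choose i : R) * (y - i) ^ j
      = (Δ_[1])^[p] (fun r : R ↦ r ^ j) (y - p) := by
  rw [fwdDiff_iter_eq_sum_shift, ← sum_range_reflect]
  refine sum_congr rfl fun i hi ↦ ?_
  have hip : i ≤ p := Nat.lt_succ_iff.1 (mem_range.1 hi)
  rw [add_tsub_cancel_right, Nat.choose_symm hip, Nat.cast_sub hip, zsmul_eq_mul, nsmul_one]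
  push_cast
  ring

theorem sum_neg_one_pow_mul_choose_mul_sub_pow_of_le {R : Type*} [CommRing R] {p j : ℕ}
    (hj : j ≤ p) (y : R) :
    ∑ i ∈ range (p + 1), (-1) ^ i * (p.choose i : R) * (y - i) ^ j
      = if j = p then (p ! : R) else 0 := by
  rw [sum_neg_one_pow_mul_choose_mul_sub_pow]
  split_ifs with h
  · subst h; simp [fwdDiff_iter_eq_factorial]
  · simp [fwdDiff_iter_pow_eq_zero_of_lt (lt_of_le_of_ne hj h)]

section

variable {E : Type*} [NormedAddCommGroup E]

theorem Asymptotics.IsLittleO.forall_norm_comp_mul_le {g : ℝ → E} {q : ℕ}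
    (hg : g =o[𝓝 0] fun t ↦ t ^ q) {K : Set ℝ} (hK : Bornology.IsBounded K) {ε : ℝ} (hε : 0 < ε) :
    ∃ δ > 0, ∀ h : ℝ, 0 < h → h < δ → ∀ x ∈ K, ‖g (h * x)‖ ≤ ε * h ^ q := by
  obtain ⟨M, hM, hKM⟩ := hK.exists_pos_norm_le
  obtain ⟨δ, hδ, hsmall⟩ := Metric.eventually_nhds_iff.1 (hg.def (div_pos hε (pow_pos hM q)))
  refine ⟨δ / M, div_pos hδ hM, fun h h0 hδM x hx ↦ ?_⟩
  have hhx : ‖h * x‖ ≤ h * M := by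
    rw [norm_mul, Real.norm_of_nonneg h0.le]
    exact mul_le_mul_of_nonneg_left (hKM x hx) h0.le
  have hclose : dist (h * x) 0 < δ := by
    rw [dist_zero_right]
    exact hhx.trans_lt ((lt_div_iff₀ hM).1 hδM)
  calc ‖g (h * x)‖ ≤ ε / M ^ q * ‖h * x‖ ^ q := by simpa [norm_pow] using hsmall hclose
    _ ≤ ε / M ^ q * (h * M) ^ q := by gcongr
    _ = ε * h ^ q := by field_simp; ring

variable [NormedSpace ℝ E]

theorem ContDiffAt.isLittleO_sub_taylor {f : ℝ → E} {x₀ : ℝ} {n : ℕ}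
    (hf : ContDiffAt ℝ n f x₀) :
    (fun u ↦ f (x₀ + u) - ∑ k ∈ range (n + 1), ((k ! : ℝ)⁻¹ * u ^ k) • iteratedDeriv k f x₀)
      =o[𝓝 0] fun u ↦ u ^ n := by
  obtain ⟨U, hU, hfU⟩ := hf.contDiffOn le_rfl (by simp)
  obtain ⟨r, hr, hball⟩ := Metric.mem_nhds_iff.1 hU
  have hx₀ : x₀ ∈ Metric.ball x₀ r := Metric.mem_ball_self hr
  have htaylor := taylor_isLittleO (convex_ball x₀ r) hx₀ (hfU.mono hball)
  rw [nhdsWithin_eq_nhds.2 (Metric.isOpen_ball.mem_nhds hx₀)] at htaylor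
  have hshift : Tendsto (x₀ + ·) (𝓝 0) (𝓝 x₀) := by
    simpa using (continuous_const_add x₀).tendsto 0
  convert htaylor.comp_tendsto hshift using 2 with u
  · simp [taylor_within_apply, iteratedDerivWithin_of_isOpen Metric.isOpen_ball hx₀]
  · simp

/-- The `p`-th central difference `δₜᵖ f(0)` of `f` at `0` with step `t`. -/
noncomputable def centralDiff (p : ℕ) (f : ℝ → E) (t : ℝ) : E :=
  ∑ i ∈ range (p + 1), ((-1) ^ i * (p.choose i : ℝ)) • f ((p / 2 - i) * t)

theorem centralDiff_add (p : ℕ) (f g : ℝ → E) (t : ℝ) :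
    centralDiff p (fun u ↦ f u + g u) t = centralDiff p f t + centralDiff p g t := by
  simp only [centralDiff, smul_add, sum_add_distrib]

theorem centralDiff_taylorPoly (p : ℕ) (a : ℕ → E) (t : ℝ) :
    centralDiff p (fun u ↦ ∑ k ∈ range (p + 1), ((k ! : ℝ)⁻¹ * u ^ k) • a k) t = t ^ p • a p := by
  have hswap : centralDiff p (fun u ↦ ∑ k ∈ range (p + 1), ((k ! : ℝ)⁻¹ * u ^ k) • a k) t
      = ∑ k ∈ range (p + 1), ((k ! : ℝ)⁻¹ * t ^ k *
          ∑ i ∈ range (p + 1), (-1) ^ i * (p.choose i : ℝ) * ((p / 2 : ℝ) - i) ^ k) • a k := by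
    simp only [centralDiff, smul_sum, smul_smul, mul_sum, sum_smul]
    rw [sum_comm]
    refine sum_congr rfl fun k _ ↦ sum_congr rfl fun i _ ↦ ?_
    congr 1
    rw [mul_pow]
    ring
  rw [hswap, sum_eq_single_of_mem p (self_mem_range_succ p) fun k hk hkp ↦ ?_]
  · rw [sum_neg_one_pow_mul_choose_mul_sub_pow_of_le le_rfl, if_pos rfl]
    field_simp
  · rw [sum_neg_one_pow_mul_choose_mul_sub_pow_of_le (Nat.lt_succ_iff.1 (mem_range.1 hk)),
      if_neg hkp, mul_zero, zero_smul]

theorem Asymptotics.IsLittleO.centralDiff {f : ℝ → E} {q : ℕ} (hf : f =o[𝓝 0] fun u ↦ u ^ q)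
    (p : ℕ) : centralDiff p f =o[𝓝 0] fun t ↦ t ^ q := by
  unfold _root_.centralDiff
  refine IsLittleO.fun_sum fun i _ ↦ IsLittleO.const_smul_left ?_ _
  set c : ℝ := p / 2 - i
  have hscale : Tendsto (c * ·) (𝓝 0) (𝓝 0) := by
    simpa using (continuous_const_mul c).tendsto 0
  refine (hf.comp_tendsto hscale).trans_isBigO ?_
  simpa [Function.comp_def, mul_pow] using
    (isBigO_refl (fun t : ℝ ↦ t ^ q) (𝓝 0)).const_mul_left (c ^ q)

end

/-- If `ρ` is `p`-times differentiable at `λ` with `ρ^{(p)}(λ) ≠ 0` and `K ⊂ ℝ` is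
compact, then the rescaled `p`-th order central difference quotients of `ρ` converge
uniformly on `K` to the monomial `x ↦ x^p` as `h → 0⁺`. -/
theorem difference_quotients_approximate_monomial
    (p : ℕ) (ρ : ℝ → ℝ) (lam : ℝ)
    (hρ : ContDiffAt ℝ p ρ lam)
    (hderiv : iteratedDeriv p ρ lam ≠ 0)
    (K : Set ℝ) (hK : IsCompact K) :
    ∀ ε > (0 : ℝ), ∃ δ > (0 : ℝ), ∀ h : ℝ, 0 < h → h < δ → ∀ x ∈ K,
      |(∑ i ∈ Finset.range (p + 1),
          ((-1 : ℝ) ^ i * (p.choose i : ℝ)) / (h ^ p * iteratedDeriv p ρ lam) *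
            ρ (((p : ℝ) / 2 - (i : ℝ)) * h * x + lam)) - x ^ p| ≤ ε := by
  intro ε hε
  set D := iteratedDeriv p ρ lam
  set r : ℝ → ℝ := fun u ↦
    ρ (lam + u) - ∑ k ∈ range (p + 1), ((k ! : ℝ)⁻¹ * u ^ k) • iteratedDeriv k ρ lam
  have hsplit (t : ℝ) : centralDiff p (fun u ↦ ρ (lam + u)) t = t ^ p * D + centralDiff p r t := by
    calc centralDiff p (fun u ↦ ρ (lam + u)) t
        = centralDiff p (fun u ↦ ∑ k ∈ range (p + 1), ((k ! : ℝ)⁻¹ * u ^ k) •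
            iteratedDeriv k ρ lam + r u) t := by simp [r]
      _ = t ^ p * D + centralDiff p r t := by rw [centralDiff_add, centralDiff_taylorPoly, smul_eq_mul]
  obtain ⟨δ, hδ, hsmall⟩ := (hρ.isLittleO_sub_taylor.centralDiff p).forall_norm_comp_mul_le
    hK.isBounded (mul_pos hε (abs_pos.2 hderiv))
  refine ⟨δ, hδ, fun h h0 hhδ x hx ↦ ?_⟩
  have hquot : ∑ i ∈ range (p + 1), ((-1 : ℝ) ^ i * (p.choose i : ℝ)) / (h ^ p * D) *
      ρ (((p : ℝ) / 2 - (i : ℝ)) * h * x + lam)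
      = centralDiff p (fun u ↦ ρ (lam + u)) (h * x) / (h ^ p * D) := by
    rw [centralDiff, sum_div]
    refine sum_congr rfl fun i _ ↦ ?_
    rw [smul_eq_mul, add_comm, mul_assoc]
    ring
  have hremainder : (∑ i ∈ range (p + 1), ((-1 : ℝ) ^ i * (p.choose i : ℝ)) / (h ^ p * D) *
      ρ (((p : ℝ) / 2 - (i : ℝ)) * h * x + lam)) - x ^ p
      = centralDiff p r (h * x) / (h ^ p * D) := by
    rw [hquot, hsplit]
    field_simp
    ring
  rw [hremainder, abs_div, abs_mul, abs_of_pos (pow_pos h0 p), div_le_iff₀ (by positivity),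
    ← Real.norm_eq_abs]
  exact (hsmall h h0 hhδ x hx).trans_eq (by ring)
end

section
/- Let d, m ∈ ℕ, let x⁽¹⁾, …, x⁽ᵐ⁾ ∈ ℝ^d be pairwise distinct points, let ρ ∈ C(ℝ) be an activation function that is not a polynomial. Then there exist first-layer parameters θ⁽¹⁾ = (W⁽¹⁾, b⁽¹⁾) ∈ ℝ^{m×d} × ℝ^m such that the m × m matrix A with entries A_{ij} = ρ(⟨W⁽¹⁾_i, x⁽ʲ⁾⟩ + b⁽¹⁾_i) is invertible; consequently, for every k ∈ ℕ and every choice of labels y⁽¹⁾, …, y⁽ᵐ⁾ ∈ ℝ^k, there is a matrix W⁽²⁾ ∈ ℝ^{k×m} such that the two-layer network x ↦ W⁽²⁾·ρ(W⁽¹⁾x + b⁽¹⁾) interpolates the data: it maps x⁽ⁱ⁾ to y⁽ⁱ⁾ for all i ∈ [m]. -/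
/-!
Project the data onto a direction `w` that separates the points, so that only distinct reals
`s j = ⟨w, x j⟩` remain. If the vectors `(ρ (a * s j + b))_j` did not span `ℝ^m`, some `c ≠ 0`
would annihilate all of them. The same relation holds for every mollification `ρ_ε` of `ρ`;
differentiating it `k` times in `a` at `a = 0` gives `(∑ j, c j * s j ^ k) * ρ_ε⁽ᵏ⁾ = 0`, and by
Vandermonde some moment with `k < m` is nonzero. So every `ρ_ε` is a polynomial of degree `< k`,
hence so is its pointwise limit `ρ`. Choosing `m` spanning vectors as rows gives an invertible
first-layer matrix `A`, and `W⁽²⁾ = Y A⁻¹` interpolates the labels.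
-/

open Matrix Polynomial Filter MeasureTheory Convolution ContinuousLinearMap
open scoped ContDiff

theorem Polynomial.exists_derivative_eq_of_mem_degreeLT {n : ℕ} {p : ℝ[X]}
    (hp : p ∈ degreeLT ℝ n) : ∃ q ∈ degreeLT ℝ (n + 1), derivative q = p := by
  classical
  rw [degreeLT_eq_span_X_pow] at hp
  induction hp using Submodule.span_induction with
  | mem _ h =>
    obtain ⟨i, hi, rfl⟩ := Finset.mem_image.mp h
    refine ⟨C ((i + 1 : ℝ)⁻¹) * X ^ (i + 1), ?_, ?_⟩
    · rw [mem_degreeLT]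
      refine (degree_C_mul_X_pow_le _ _).trans_lt ?_
      exact_mod_cast Nat.succ_lt_succ (Finset.mem_range.mp hi)
    · rw [derivative_C_mul_X_pow, Nat.add_sub_cancel]
      push_cast
      rw [inv_mul_cancel₀ (by positivity), C_1, one_mul]
  | zero => exact ⟨0, zero_mem _, derivative_zero⟩
  | add p₁ p₂ _ _ h₁ h₂ =>
    obtain ⟨q₁, hq₁, rfl⟩ := h₁
    obtain ⟨q₂, hq₂, rfl⟩ := h₂
    exact ⟨q₁ + q₂, add_mem hq₁ hq₂, derivative_add⟩
  | smul a p _ h =>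
    obtain ⟨q, hq, rfl⟩ := h
    exact ⟨a • q, Submodule.smul_mem _ a hq, derivative_smul a q⟩

theorem exists_polynomial_of_iteratedDeriv_eq_zero {n : ℕ} {g : ℝ → ℝ} (hg : ContDiff ℝ n g)
    (h : ∀ t, iteratedDeriv n g t = 0) : ∃ p ∈ degreeLT ℝ n, ∀ t, g t = p.eval t := by
  induction n generalizing g with
  | zero => exact ⟨0, zero_mem _, by simpa using h⟩
  | succ n ih =>
    obtain ⟨hg_diff, -, hg'⟩ :=
      contDiff_succ_iff_deriv.mp (show ContDiff ℝ ((n : WithTop ℕ∞) + 1) g by exact_mod_cast hg)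
    obtain ⟨p, hp, hgp⟩ := ih hg' (by simpa only [iteratedDeriv_succ'] using h)
    obtain ⟨q, hq, rfl⟩ := Polynomial.exists_derivative_eq_of_mem_degreeLT hp
    have hconst : ∀ t, g t - q.eval t = g 0 - q.eval 0 := fun t =>
      is_const_of_deriv_eq_zero (hg_diff.fun_sub q.differentiable) (fun u => by
        rw [deriv_fun_sub (hg_diff u) q.differentiableAt, Polynomial.deriv, hgp, sub_self]) t 0
    refine ⟨q + C (g 0 - q.eval 0), add_mem hq ?_, fun t => ?_⟩
    · rw [mem_degreeLT]
      exact degree_C_le.trans_lt (by exact_mod_cast Nat.succ_pos n)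
    · simp only [eval_add, eval_C]
      linarith [hconst t]

theorem Polynomial.eval_eq_sum_lagrange_basis {F : Type*} [Field F] [CharZero F] {n : ℕ}
    {p : F[X]} (hp : p ∈ degreeLT F n) (t : F) :
    p.eval t = ∑ i ∈ Finset.range n,
      p.eval (i : F) * (Lagrange.basis (Finset.range n) (fun i : ℕ => (i : F)) i).eval t := by
  have hinj : Set.InjOn (fun i : ℕ => (i : F)) (Finset.range n) :=
    fun i _ j _ h => Nat.cast_injective h
  conv_lhs => rw [Lagrange.eq_interpolate (f := p) hinj (by simpa [mem_degreeLT] using hp)]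
  simp [Lagrange.interpolate_apply, eval_finsetSum]

/-- Lagrange interpolation at the nodes `0, …, n - 1` writes each `f i` through its values there,
which converge. -/
theorem exists_polynomial_of_tendsto {ι : Type*} {l : Filter ι} [l.NeBot] {n : ℕ}
    {f : ι → ℝ → ℝ} {g : ℝ → ℝ} (hfg : ∀ t, Tendsto (fun i => f i t) l (nhds (g t)))
    (hf : ∀ i, ∃ p ∈ degreeLT ℝ n, ∀ t, f i t = p.eval t) :
    ∃ P : ℝ[X], ∀ t, g t = P.eval t := by
  choose p hp hfp using hf
  let L : ℕ → ℝ[X] := Lagrange.basis (Finset.range n) (fun i : ℕ => (i : ℝ))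
  refine ⟨∑ i ∈ Finset.range n, C (g i) * L i, fun t => ?_⟩
  have hlim : Tendsto (fun k => f k t) l (nhds (∑ i ∈ Finset.range n, g i * (L i).eval t)) := by
    simp_rw [hfp, fun k => (p k).eval_eq_sum_lagrange_basis (hp k) t, ← hfp]
    exact tendsto_finsetSum _ fun i _ => (hfg i).mul_const _
  simpa [eval_finsetSum] using tendsto_nhds_unique (hfg t) hlim

def IsRidgeRelation {m : ℕ} (f : ℝ → ℝ) (s c : Fin m → ℝ) : Prop :=
  ∀ a b : ℝ, ∑ j, c j * f (a * s j + b) = 0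

namespace IsRidgeRelation

variable {m : ℕ} {f : ℝ → ℝ} {s c : Fin m → ℝ}

theorem deriv (h : IsRidgeRelation f s c) (hf : Differentiable ℝ f) :
    IsRidgeRelation (deriv f) s (fun j => c j * s j) := by
  intro a b
  have hsum : HasDerivAt (fun a => ∑ j, c j * f (a * s j + b))
      (∑ j, c j * (_root_.deriv f (a * s j + b) * s j)) a :=
    HasDerivAt.fun_sum fun j _ => by
      have hlin : HasDerivAt (fun a => a * s j + b) (s j) a := by
        simpa using ((hasDerivAt_id a).mul_const (s j)).add_const b
      exact ((hf _).hasDerivAt.comp a hlin).const_mul (c j)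
  have hzero : (fun a => ∑ j, c j * f (a * s j + b)) = fun _ => 0 := funext fun a => h a b
  rw [hzero] at hsum
  calc ∑ j, c j * s j * _root_.deriv f (a * s j + b)
      = ∑ j, c j * (_root_.deriv f (a * s j + b) * s j) := by
        refine Finset.sum_congr rfl fun j _ => ?_; ring
    _ = 0 := hsum.unique (hasDerivAt_const a 0)

theorem iteratedDeriv (h : IsRidgeRelation f s c) (hf : ContDiff ℝ ∞ f) (k : ℕ) :
    IsRidgeRelation (iteratedDeriv k f) s (fun j => c j * s j ^ k) := by
  induction k with
  | zero => simpa using h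
  | succ k ih =>
    have hk : Differentiable ℝ (_root_.iteratedDeriv k f) :=
      hf.differentiable_iteratedDeriv k (by exact_mod_cast ENat.natCast_lt_top k)
    simpa only [iteratedDeriv_succ, pow_succ, mul_assoc] using ih.deriv hk

theorem sum_mul_eq_zero (h : IsRidgeRelation f s c) (b : ℝ) : (∑ j, c j) * f b = 0 := by
  simpa [Finset.sum_mul] using h 0 b

theorem convolution (h : IsRidgeRelation f s c) (hf : Continuous f) {φ : ℝ → ℝ}
    (hφ : HasCompactSupport φ) (hφi : LocallyIntegrable φ) :
    IsRidgeRelation (φ ⋆[lsmul ℝ ℝ] f) s c := by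
  intro a b
  have hint : ∀ j, Integrable (fun t => φ t * f (a * s j + b - t)) := fun j => by
    simpa [ConvolutionExistsAt] using
      hφ.convolutionExists_left_of_continuous_right (lsmul ℝ ℝ) hφi hf (a * s j + b)
  calc ∑ j, c j * (φ ⋆[lsmul ℝ ℝ] f) (a * s j + b)
      = ∫ t, ∑ j, c j * (φ t * f (a * s j + b - t)) := by
        rw [integral_finsetSum _ fun j _ => (hint j).const_mul (c j)]
        simp [convolution_def, integral_const_mul]
    _ = ∫ t, φ t * ∑ j, c j * f (a * s j + (b - t)) := by
        congr 1; ext t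
        rw [Finset.mul_sum]
        refine Finset.sum_congr rfl fun j _ => ?_
        rw [add_sub_assoc]; ring
    _ = 0 := by simp [h a]

end IsRidgeRelation

theorem IsRidgeRelation.exists_polynomial {m : ℕ} {ρ : ℝ → ℝ} {s c : Fin m → ℝ}
    (h : IsRidgeRelation ρ s c) (hρ : Continuous ρ) {k : ℕ} (hk : ∑ j, c j * s j ^ k ≠ 0) :
    ∃ P : ℝ[X], ∀ t, ρ t = P.eval t := by
  let φ : ℕ → ContDiffBump (0 : ℝ) := fun n =>
    ⟨(n + 1 : ℝ)⁻¹, 2 * (n + 1 : ℝ)⁻¹, by positivity, by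
      linarith [show (0 : ℝ) < (n + 1 : ℝ)⁻¹ by positivity]⟩
  have hφ : Tendsto (fun n => (φ n).rOut) atTop (nhds 0) := by
    simpa [φ, one_div] using tendsto_one_div_add_atTop_nhds_zero_nat.const_mul (2 : ℝ)
  let f : ℕ → ℝ → ℝ := fun n => (φ n).normed volume ⋆[lsmul ℝ ℝ] ρ
  refine exists_polynomial_of_tendsto (n := k)
    (ContDiffBump.convolution_tendsto_right_of_continuous (μ := volume) hφ hρ) fun n => ?_
  have hf : ContDiff ℝ ∞ (f n) := (φ n).hasCompactSupport_normed.contDiff_convolution_left _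
    (φ n).contDiff_normed hρ.locallyIntegrable
  have hrel := (h.convolution hρ (φ n).hasCompactSupport_normed
    (φ n).continuous_normed.locallyIntegrable).iteratedDeriv hf k
  exact exists_polynomial_of_iteratedDeriv_eq_zero (hf.of_le (by exact_mod_cast le_top))
    fun t => (mul_eq_zero.mp (hrel.sum_mul_eq_zero t)).resolve_left hk

theorem span_range_eq_top_of_forall_dotProduct_eq_zero {K α : Type*} [Field K] {m : ℕ}
    (F : α → Fin m → K) (h : ∀ c : Fin m → K, (∀ a, c ⬝ᵥ F a = 0) → c = 0) :
    Submodule.span K (Set.range F) = ⊤ := by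
  by_contra hne
  obtain ⟨g, hg, hker⟩ := Submodule.exists_le_ker_of_lt_top _ (lt_top_iff_ne_top.mpr hne)
  let e := dotProductEquiv K (Fin m)
  have hc : e.symm g = 0 := h _ fun a => by
    have hga := hker (Submodule.subset_span ⟨a, rfl⟩)
    rwa [LinearMap.mem_ker, ← e.apply_symm_apply g] at hga
  exact hg (by simpa using hc)

theorem span_ridge_eq_top {m : ℕ} {ρ : ℝ → ℝ} (hρ : Continuous ρ)
    (hρpoly : ¬ ∃ P : ℝ[X], ∀ t, ρ t = P.eval t) {s : Fin m → ℝ} (hs : Function.Injective s) :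
    Submodule.span ℝ (Set.range fun ab : ℝ × ℝ => fun j => ρ (ab.1 * s j + ab.2)) = ⊤ := by
  refine span_range_eq_top_of_forall_dotProduct_eq_zero _ fun c hc => ?_
  refine eq_zero_of_forall_pow_sum_mul_pow_eq_zero hs fun k => ?_
  by_contra hk
  exact hρpoly (IsRidgeRelation.exists_polynomial (fun a b => hc (a, b)) hρ hk)

theorem exists_isUnit_of_span_range_eq_top {K α : Type*} [Field K] {m : ℕ} (F : α → Fin m → K)
    (hF : Submodule.span K (Set.range F) = ⊤) :
    ∃ r : Fin m → α, IsUnit (Matrix.of fun i j => F (r i) j) := by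
  let b := Module.Basis.ofSpan hF.ge
  let e := b.indexEquiv (Pi.basisFun K (Fin m))
  choose r hr using fun i => Module.Basis.ofSpan_subset hF.ge ⟨e.symm i, rfl⟩
  have hrows : (fun i => F (r i)) = b ∘ e.symm := funext fun i => by simp [hr, b]
  refine ⟨r, linearIndependent_rows_iff_isUnit.mp ?_⟩
  simpa [hrows] using b.linearIndependent.comp e.symm e.symm.injective

theorem exists_injective_dotProduct {K : Type*} [Field K] [Infinite K] {d m : ℕ}
    {x : Fin m → Fin d → K} (hx : Function.Injective x) :
    ∃ w : Fin d → K, Function.Injective fun j => w ⬝ᵥ x j := by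
  by_contra! h
  let e := dotProductEquiv K (Fin d)
  have hcover : ⋃ q : {q : Fin m × Fin m // q.1 ≠ q.2},
      (LinearMap.ker (e (x q.1.1 - x q.1.2)) : Set (Fin d → K)) = Set.univ := by
    refine Set.eq_univ_of_forall fun w => ?_
    obtain ⟨j, j', hjj', hne⟩ := Function.not_injective_iff.mp (h w)
    refine Set.mem_iUnion.mpr ⟨⟨(j, j'), hne⟩, ?_⟩
    simpa [e, dotProduct_comm _ w, sub_eq_zero] using hjj'
  obtain ⟨⟨⟨j, j'⟩, hne⟩, htop⟩ := Subspace.exists_eq_top_of_iUnion_eq_univ hcover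
  exact hne (hx (sub_eq_zero.mp (e.map_eq_zero_iff.mp (LinearMap.ker_eq_top.mp htop))))

/-- Interpolation with two-layer networks: for pairwise distinct points
`x⁽¹⁾, …, x⁽ᵐ⁾ ∈ ℝ^d` and a continuous non-polynomial activation `ρ`, there exist
first-layer parameters `(W⁽¹⁾, b⁽¹⁾)` such that the matrix
`A_{ij} = ρ(⟨W⁽¹⁾_i, x⁽ʲ⁾⟩ + b⁽¹⁾_i)` is invertible; consequently, for every `k` and
every choice of labels `y⁽ⁱ⁾ ∈ ℝ^k` there is a second-layer matrix `W⁽²⁾` such that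
the network `x ↦ W⁽²⁾·ρ(W⁽¹⁾x + b⁽¹⁾)` maps `x⁽ⁱ⁾` to `y⁽ⁱ⁾` for all `i`. -/
theorem two_layer_interpolation
    (d m : ℕ) (x : Fin m → Fin d → ℝ) (hx : Function.Injective x)
    (ρ : ℝ → ℝ) (hρcont : Continuous ρ)
    (hρpoly : ¬ ∃ P : Polynomial ℝ, ∀ t : ℝ, ρ t = P.eval t) :
    ∃ (W1 : Fin m → Fin d → ℝ) (b1 : Fin m → ℝ),
      IsUnit (Matrix.of fun i j : Fin m => ρ (W1 i ⬝ᵥ x j + b1 i)) ∧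
      ∀ (k : ℕ) (y : Fin m → Fin k → ℝ),
        ∃ W2 : Matrix (Fin k) (Fin m) ℝ,
          ∀ i : Fin m, (fun j : Fin k => ∑ l : Fin m, W2 j l * ρ (W1 l ⬝ᵥ x i + b1 l)) = y i := by
  obtain ⟨w, hw⟩ := exists_injective_dotProduct hx
  obtain ⟨r, hr⟩ := exists_isUnit_of_span_range_eq_top _ (span_ridge_eq_top hρcont hρpoly hw)
  refine ⟨fun i => (r i).1 • w, fun i => (r i).2, ?_⟩
  set A := Matrix.of fun i j : Fin m => ρ (((r i).1 • w) ⬝ᵥ x j + (r i).2)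
  have hA : IsUnit A := by simpa [A, smul_dotProduct] using hr
  refine ⟨hA, fun k y => ?_⟩
  let Y : Matrix (Fin k) (Fin m) ℝ := of fun j i => y i j
  refine ⟨Y * A⁻¹, fun i => funext fun j => ?_⟩
  have hY := nonsing_inv_mul_cancel_right A Y ((isUnit_iff_isUnit_det A).mp hA)
  simpa [mul_apply, A, Y] using congrFun (congrFun hY j) i
end

section
/- (Carathéodory lemma in Hilbert space) Let H be a real Hilbert space, n ∈ ℕ, C > 0, and F ⊂ H with ‖f‖ ≤ C for all f ∈ F. If g lies in the convex hull of F, then there exist f₁, …, f_n ∈ F and coefficients c ∈ [0,1]^n with Σᵢ cᵢ = 1 such that ‖g − Σᵢ cᵢ fᵢ‖ ≤ C/√n. -/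
/-!
Instead of sampling, choose `f₁, f₂, … ∈ F` greedily. Given the error
`v = k • g - (f₁ + ⋯ + f_k)`, the affine function `f ↦ ‖v + g‖² - 2 ⟪v + g, f⟫` takes the value
`‖v‖² - ‖g‖² ≤ ‖v‖²` at `g`, hence some `f ∈ F` does no worse; since `‖f‖ ≤ C`, adding this
`f` raises the squared error by at most `C²`. After `n` steps `‖n • g - ∑ fᵢ‖² ≤ n C²`, and the
uniform weights `cᵢ = 1 / n` give the bound `C / √n`.
-/

open RealInnerProductSpace

section

variable {H : Type*} [NormedAddCommGroup H] [InnerProductSpace ℝ H]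

theorem exists_inner_le_inner_of_mem_convexHull {s : Set H} {x : H} (hx : x ∈ convexHull ℝ s)
    (u : H) : ∃ y ∈ s, ⟪u, x⟫ ≤ ⟪u, y⟫ :=
  ((innerₛₗ ℝ u).convexOn convex_univ).exists_ge_of_mem_convexHull (Set.subset_univ s) hx

theorem exists_norm_add_sub_sq_le {F : Set H} {C : ℝ} (hF : ∀ f ∈ F, ‖f‖ ≤ C) {g : H}
    (hg : g ∈ convexHull ℝ F) (v : H) : ∃ f ∈ F, ‖v + (g - f)‖ ^ 2 ≤ ‖v‖ ^ 2 + C ^ 2 := by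
  obtain ⟨f, hf, hinner⟩ := exists_inner_le_inner_of_mem_convexHull hg (v + g)
  refine ⟨f, hf, ?_⟩
  have hfC : ‖f‖ ^ 2 ≤ C ^ 2 := pow_le_pow_left₀ (norm_nonneg f) (hF f hf) 2
  rw [← add_sub_assoc, norm_sub_sq_real, norm_add_sq_real]
  rw [inner_add_left, real_inner_self_eq_norm_sq] at hinner
  nlinarith [sq_nonneg ‖g‖]

theorem exists_norm_nsmul_sub_sum_sq_le {F : Set H} {C : ℝ} (hF : ∀ f ∈ F, ‖f‖ ≤ C) {g : H}
    (hg : g ∈ convexHull ℝ F) (n : ℕ) :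
    ∃ f : Fin n → H, (∀ i, f i ∈ F) ∧ ‖n • g - ∑ i, f i‖ ^ 2 ≤ n * C ^ 2 := by
  induction n with
  | zero => exact ⟨Fin.elim0, Fin.rec0, by simp⟩
  | succ n ih =>
    obtain ⟨f, hfF, hf⟩ := ih
    obtain ⟨f₀, hf₀, hstep⟩ := exists_norm_add_sub_sq_le hF hg (n • g - ∑ i, f i)
    refine ⟨Fin.cons f₀ f, Fin.cases hf₀ hfF, ?_⟩
    have hsplit : (n + 1) • g - ∑ i, (Fin.cons f₀ f : Fin (n + 1) → H) i
        = (n • g - ∑ i, f i) + (g - f₀) := by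
      rw [Fin.sum_cons, succ_nsmul]
      abel
    rw [hsplit]
    push_cast
    linarith

end

theorem approximate_caratheodory_general
    {H : Type*} [NormedAddCommGroup H] [InnerProductSpace ℝ H]
    (n : ℕ) (hn : 0 < n) (C : ℝ)
    (F : Set H) (hF : ∀ f ∈ F, ‖f‖ ≤ C)
    (g : H) (hg : g ∈ convexHull ℝ F) :
    ∃ (f : Fin n → H) (c : Fin n → ℝ),
      (∀ i, f i ∈ F) ∧ (∀ i, c i ∈ Set.Icc (0 : ℝ) 1) ∧ (∑ i, c i = 1) ∧
      ‖g - ∑ i, c i • f i‖ ≤ C / Real.sqrt n := by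
  obtain ⟨f, hfF, hf⟩ := exists_norm_nsmul_sub_sum_sq_le hF hg n
  obtain ⟨f₀, hf₀⟩ := convexHull_nonempty_iff.1 ⟨g, hg⟩
  have hC : 0 ≤ C := (norm_nonneg f₀).trans (hF f₀ hf₀)
  have hn' : (0 : ℝ) < n := Nat.cast_pos.2 hn
  have hnorm : ‖n • g - ∑ i, f i‖ ≤ Real.sqrt n * C := by
    rw [← Real.sqrt_sq hC, ← Real.sqrt_mul hn'.le]
    exact Real.le_sqrt_of_sq_le hf
  refine ⟨f, fun _ => (n : ℝ)⁻¹, hfF, fun _ => ⟨by positivity, inv_le_one_of_one_le₀ ?_⟩, ?_, ?_⟩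
  · exact_mod_cast hn
  · simp [hn'.ne']
  calc ‖g - ∑ i, (n : ℝ)⁻¹ • f i‖ = (n : ℝ)⁻¹ * ‖n • g - ∑ i, f i‖ := by
        rw [← Finset.smul_sum, ← Nat.cast_smul_eq_nsmul ℝ, ← inv_smul_smul₀ hn'.ne' g, ← smul_sub,
          inv_smul_smul₀ hn'.ne', norm_smul, norm_inv, Real.norm_natCast]
    _ ≤ (n : ℝ)⁻¹ * (Real.sqrt n * C) := by gcongr
    _ = C / Real.sqrt n := by
        field_simp
        rw [Real.sq_sqrt hn'.le]

/-- Approximate Carathéodory lemma in Hilbert space: if `F` is a subset of a real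
Hilbert space with `‖f‖ ≤ C` for all `f ∈ F`, and `g` lies in the convex hull of `F`,
then there are `f₁, …, f_n ∈ F` and convex coefficients `c` such that
`‖g − Σᵢ cᵢ fᵢ‖ ≤ C/√n`. -/
theorem approximate_caratheodory
    {H : Type*} [NormedAddCommGroup H] [InnerProductSpace ℝ H] [CompleteSpace H]
    (n : ℕ) (hn : 0 < n) (C : ℝ) (hC : 0 < C)
    (F : Set H) (hF : ∀ f ∈ F, ‖f‖ ≤ C)
    (g : H) (hg : g ∈ convexHull ℝ F) :
    ∃ (f : Fin n → H) (c : Fin n → ℝ),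
      (∀ i, f i ∈ F) ∧ (∀ i, c i ∈ Set.Icc (0 : ℝ) 1) ∧ (∑ i, c i = 1) ∧
      ‖g - ∑ i, c i • f i‖ ≤ C / Real.sqrt n :=
  approximate_caratheodory_general n hn C F hF g hg
end

section
/- Let d, n ∈ ℕ with n ≥ 100, let μ be a probability measure on the unit ball B₁(0) ⊂ ℝ^d, and let Φ(x) = Σ_{i=1}^n w⁽²⁾_i · ρ_R(⟨w⁽¹⁾_i, x⟩ + b⁽¹⁾_i) be a two-layer ReLU network with ‖w⁽¹⁾_i‖₂ ≤ 1/2 and |b⁽¹⁾_i| ≤ 1/2 for every i. Then there exists an index set I ⊂ [n] with |I| ≤ n/100 and coefficients w̃⁽²⁾ supported on I such that the pruned network Φ̃(x) = Σ_{i∈I} w̃⁽²⁾_i · ρ_R(⟨w⁽¹⁾_i, x⟩ + b⁽¹⁾_i) satisfies ‖Φ − Φ̃‖_{L²(μ)} ≤ 15·‖w⁽²⁾‖₁/√n. -/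
/-!
On the unit ball every neuron `ρ(⟪w⁽¹⁾ᵢ, x⟫ + b⁽¹⁾ᵢ)` takes values in `[0, 1]`, so in `L²(μ)` the
network is a convex combination of the atoms `‖w⁽²⁾‖₁ · sign(w⁽²⁾ᵢ) · ρ(⟪w⁽¹⁾ᵢ, ·⟫ + b⁽¹⁾ᵢ)`,
each of norm at most `‖w⁽²⁾‖₁`. Maurey's argument picks `k = ⌊n / 100⌋` atoms one at a time: averaged
with the convex weights, adding an atom increases the squared error of the running sum by at most
`‖w⁽²⁾‖₁²` (a variance bound), so some atom does no worse than this average. The mean of the chosen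
atoms is thus within `‖w⁽²⁾‖₁ / √k` of the network, and `n ≤ 225 k` gives `1 / √k ≤ 15 / √n`.
-/

open MeasureTheory
open scoped RealInnerProductSpace

section ApproximateCaratheodory

variable {ι E : Type*} [Fintype ι] [NormedAddCommGroup E] [InnerProductSpace ℝ E]

theorem exists_le_sum_mul {a : ι → ℝ} (ha0 : ∀ i, 0 ≤ a i) (ha1 : ∑ i, a i = 1) (v : ι → ℝ) :
    ∃ i, v i ≤ ∑ j, a j * v j := by
  obtain ⟨i, -, hi⟩ := (concaveOn_id convex_univ).exists_le_of_centerMass (t := Finset.univ)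
    (fun i _ => ha0 i) (by rw [ha1]; exact one_pos) (fun i _ => Set.mem_univ (v i))
  exact ⟨i, by simpa [Finset.centerMass_eq_of_sum_1 _ _ ha1] using hi⟩

theorem sum_mul_norm_sub_sq_le {a : ι → ℝ} (ha0 : ∀ i, 0 ≤ a i) (ha1 : ∑ i, a i = 1)
    {g : ι → E} {R : ℝ} (hg : ∀ i, ‖g i‖ ≤ R) (v : E) :
    ∑ i, a i * ‖v - g i‖ ^ 2 ≤ ‖v - ∑ i, a i • g i‖ ^ 2 + R ^ 2 := by
  have hexpand : ∑ i, a i * ‖v - g i‖ ^ 2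
      = ‖v‖ ^ 2 - 2 * ⟪v, ∑ i, a i • g i⟫ + ∑ i, a i * ‖g i‖ ^ 2 := by
    simp only [norm_sub_sq_real, inner_sum, real_inner_smul_right, mul_add, mul_sub,
      Finset.sum_add_distrib, Finset.sum_sub_distrib, ← Finset.sum_mul, ha1, Finset.mul_sum]
    ring_nf
  have hmoment : ∑ i, a i * ‖g i‖ ^ 2 ≤ R ^ 2 := by
    calc ∑ i, a i * ‖g i‖ ^ 2 ≤ ∑ i, a i * R ^ 2 := by
          gcongr with i
          · exact ha0 i
          · exact hg i
      _ = R ^ 2 := by rw [← Finset.sum_mul, ha1, one_mul]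
  rw [hexpand, norm_sub_sq_real]
  nlinarith [sq_nonneg ‖∑ i, a i • g i‖]

/-- Unnormalised so that the induction on `k` goes through; each new atom `g i` is chosen so as
not to exceed the `a`-average of the squared error. -/
theorem exists_sum_eq_norm_smul_sum_sub_sq_le {a : ι → ℝ} (ha0 : ∀ i, 0 ≤ a i)
    (ha1 : ∑ i, a i = 1) {g : ι → E} {R : ℝ} (hg : ∀ i, ‖g i‖ ≤ R) (k : ℕ) :
    ∃ c : ι → ℕ, ∑ i, c i = k ∧
      ‖(k : ℝ) • ∑ i, a i • g i - ∑ i, (c i : ℝ) • g i‖ ^ 2 ≤ k * R ^ 2 := by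
  classical
  induction k with
  | zero => exact ⟨0, by simp, by simp⟩
  | succ k ih =>
    obtain ⟨c, hc, hck⟩ := ih
    set f := ∑ i, a i • g i
    set S := ∑ i, (c i : ℝ) • g i
    set v := ((k : ℝ) + 1) • f - S
    obtain ⟨i, hi⟩ := exists_le_sum_mul ha0 ha1 fun i => ‖v - g i‖ ^ 2
    refine ⟨c + Pi.single i 1, by simp [Finset.sum_add_distrib, hc], ?_⟩
    have hstep : ((k + 1 : ℕ) : ℝ) • f - ∑ j, ((c + Pi.single i 1 : ι → ℕ) j : ℝ) • g j
        = v - g i := by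
      simp [v, S, add_smul, Finset.sum_add_distrib, Pi.single_apply, sub_sub]
    have hshift : v - f = (k : ℝ) • f - S := by simp only [v, add_smul, one_smul]; abel
    rw [hstep]
    calc ‖v - g i‖ ^ 2 ≤ ∑ j, a j * ‖v - g j‖ ^ 2 := hi
      _ ≤ ‖v - f‖ ^ 2 + R ^ 2 := sum_mul_norm_sub_sq_le ha0 ha1 hg v
      _ ≤ k * R ^ 2 + R ^ 2 := by rw [hshift]; gcongr
      _ = ((k + 1 : ℕ) : ℝ) * R ^ 2 := by push_cast; ring

/-- Approximate Carathéodory: `∑ w i • g i` is the convex combination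
`∑ (|w i| / ‖w‖₁) • (‖w‖₁ • sign (w i) • g i)`, approximated by an average of `k` atoms. -/
theorem exists_sparse_norm_sum_sub_sq_le (w : ι → ℝ) {g : ι → E} {R : ℝ}
    (hg : ∀ i, ‖g i‖ ≤ R) {k : ℕ} (hk : 0 < k) :
    ∃ (s : Finset ι) (w' : ι → ℝ), s.card ≤ k ∧ (∀ i ∉ s, w' i = 0) ∧
      ‖∑ i, w i • g i - ∑ i, w' i • g i‖ ^ 2 ≤ (R * ∑ i, |w i|) ^ 2 / k := by
  classical
  set A := ∑ i, |w i|
  rcases (Finset.sum_nonneg fun i _ => abs_nonneg (w i) : 0 ≤ A).eq_or_lt with hA | hA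
  · have hw : w = 0 := funext fun i => abs_eq_zero.1 <|
      (Finset.sum_eq_zero_iff_of_nonneg fun j _ => abs_nonneg (w j)).1 hA.symm i (by simp)
    exact ⟨∅, 0, by simp, by simp, by simpa [hw] using div_nonneg (sq_nonneg (R * A)) k.cast_nonneg⟩
  set h : ι → E := fun i => (A * SignType.sign (w i)) • g i
  have hh : ∀ i, ‖h i‖ ≤ A * R := fun i => by
    rw [norm_smul, norm_mul, Real.norm_of_nonneg hA.le, mul_assoc]
    gcongr
    calc ‖(SignType.sign (w i) : ℝ)‖ * ‖g i‖ ≤ 1 * R := by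
          gcongr
          · cases SignType.sign (w i) <;> simp
          · exact hg i
      _ = R := one_mul R
  obtain ⟨c, hc, hcR⟩ := exists_sum_eq_norm_smul_sum_sub_sq_le (a := fun i => |w i| / A)
    (fun i => by positivity) (by rw [← Finset.sum_div, div_self hA.ne']) hh k
  set w' : ι → ℝ := fun i => A * SignType.sign (w i) * c i / k
  refine ⟨({i | c i ≠ 0} : Finset ι), w', ?_, fun i hi => by simp_all [w'], ?_⟩
  · simpa [Finset.sum_filter_ne_zero, hc] using
      Finset.card_nsmul_le_sum {i | c i ≠ 0} c 1 (by simp [Nat.one_le_iff_ne_zero])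
  have hk' : (0 : ℝ) < k := by exact_mod_cast hk
  have hconvex : ∑ i, (|w i| / A) • h i = ∑ i, w i • g i := by
    refine Finset.sum_congr rfl fun i _ => ?_
    rw [smul_smul, div_mul_eq_mul_div, mul_div_assoc, mul_div_cancel_left₀ _ hA.ne', abs_mul_sign]
  have hatoms : ∑ i, (c i : ℝ) • h i = (k : ℝ) • ∑ i, w' i • g i := by
    rw [Finset.smul_sum]
    refine Finset.sum_congr rfl fun i _ => ?_
    rw [smul_smul, smul_smul]
    congr 1
    simp only [w']
    field_simp
  rw [hconvex, hatoms, ← smul_sub, norm_smul, mul_pow, Real.norm_natCast] at hcR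
  rw [le_div_iff₀ hk']
  nlinarith

end ApproximateCaratheodory

section L2

variable {α ι : Type*} [MeasurableSpace α] {μ : Measure α}

theorem Lp.coeFn_finsetSum {E : Type*} [NormedAddCommGroup E] {p : ENNReal} (s : Finset ι)
    (u : ι → Lp E p μ) : ⇑(∑ i ∈ s, u i) =ᵐ[μ] fun x => ∑ i ∈ s, u i x := by
  classical
  induction s using Finset.induction_on with
  | empty => rw [Finset.sum_empty]; exact Lp.coeFn_zero E p μ
  | insert j s hj ih =>
    simp only [Finset.sum_insert hj]
    filter_upwards [Lp.coeFn_add (u j) (∑ i ∈ s, u i), ih] with x hadd hsum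
    rw [hadd, Pi.add_apply, hsum]

theorem Lp.norm_sq_eq_integral_sq (h : Lp ℝ 2 μ) : ‖h‖ ^ 2 = ∫ x, h x ^ 2 ∂μ := by
  rw [← real_inner_self_eq_norm_sq, L2.inner_def]
  simp [sq]

theorem norm_toLp_le_of_ae_bound [IsProbabilityMeasure μ] {E : Type*} [NormedAddCommGroup E]
    {p : ENNReal} {f : α → E} (hf : MemLp f p μ) {C : ℝ} (hC : 0 ≤ C)
    (hfC : ∀ᵐ x ∂μ, ‖f x‖ ≤ C) : ‖hf.toLp f‖ ≤ C := by
  have hbound : ∀ᵐ x ∂μ, ‖hf.toLp f x‖ ≤ C := by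
    filter_upwards [hf.coeFn_toLp, hfC] with x hx hxC
    rwa [hx]
  simpa [measureUnivNNReal] using Lp.norm_le_of_ae_bound hC hbound

theorem integral_sq_sum_sub_sum_eq_norm_sq [Fintype ι] {f : ι → α → ℝ}
    (hf : ∀ i, MemLp (f i) 2 μ) (v v' : ι → ℝ) :
    ∫ x, (∑ i, v i * f i x - ∑ i, v' i * f i x) ^ 2 ∂μ
      = ‖∑ i, v i • (hf i).toLp (f i) - ∑ i, v' i • (hf i).toLp (f i)‖ ^ 2 := by
  have hsum : ∀ u : ι → ℝ,
      ⇑(∑ i, u i • (hf i).toLp (f i)) =ᵐ[μ] fun x => ∑ i, u i * f i x := fun u => by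
    have hterm : ∀ᵐ x ∂μ, ∀ i, (u i • (hf i).toLp (f i)) x = u i * f i x := by
      rw [ae_all_iff]
      intro i
      filter_upwards [Lp.coeFn_smul (u i) ((hf i).toLp (f i)), (hf i).coeFn_toLp] with x hs ht
      rw [hs, Pi.smul_apply, ht, smul_eq_mul]
    filter_upwards [Lp.coeFn_finsetSum Finset.univ fun i => u i • (hf i).toLp (f i), hterm]
      with x hs ht
    simp only [hs, ht]
  rw [Lp.norm_sq_eq_integral_sq]
  refine integral_congr_ae ?_
  filter_upwards [Lp.coeFn_sub (∑ i, v i • (hf i).toLp (f i)) (∑ i, v' i • (hf i).toLp (f i)),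
    hsum v, hsum v'] with x hsub hv hv'
  rw [hsub, Pi.sub_apply, hv, hv']

end L2

theorem abs_relu_le_one {F : Type*} [NormedAddCommGroup F] [InnerProductSpace ℝ F] {w x : F}
    {b : ℝ} (hw : ‖w‖ ≤ 1 / 2) (hb : |b| ≤ 1 / 2) (hx : ‖x‖ ≤ 1) :
    |max 0 (⟪w, x⟫ + b)| ≤ 1 := by
  have hinner : ⟪w, x⟫ ≤ 1 / 2 :=
    (real_inner_le_norm w x).trans <| by nlinarith [norm_nonneg w, norm_nonneg x]
  rw [abs_of_nonneg (le_max_left _ _)]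
  exact max_le zero_le_one (by linarith [le_abs_self b])

theorem sq_div_natDiv_hundred_le {n : ℕ} (hn : 100 ≤ n) (A : ℝ) :
    A ^ 2 / ((n / 100 : ℕ) : ℝ) ≤ (15 * A / √n) ^ 2 := by
  have hk : (0 : ℝ) < (n / 100 : ℕ) := by exact_mod_cast Nat.div_pos hn (by norm_num)
  have hn225 : (n : ℝ) ≤ 225 * (n / 100 : ℕ) := by exact_mod_cast (by omega : n ≤ 225 * (n / 100))
  rw [div_pow, mul_pow, Real.sq_sqrt n.cast_nonneg, div_le_div_iff₀ hk (by positivity)]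
  nlinarith [sq_nonneg A]

/-- Carathéodory pruning of two-layer ReLU networks: for a probability measure `μ` on
the unit ball of `ℝ^d` and a two-layer ReLU network with `n ≥ 100` hidden neurons whose
first-layer weights satisfy `‖w⁽¹⁾ᵢ‖ ≤ 1/2` and `|b⁽¹⁾ᵢ| ≤ 1/2`, there is a pruned
network supported on at most `n/100` neurons (keeping the first-layer parameters and
changing only the outer weights) within `L²(μ)`-distance `15·‖w⁽²⁾‖₁/√n`. -/
theorem caratheodory_pruning
    (d n : ℕ) (hn : 100 ≤ n)
    (μ : Measure (EuclideanSpace ℝ (Fin d))) [IsProbabilityMeasure μ]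
    (hμ : μ (Metric.closedBall 0 1)ᶜ = 0)
    (w1 : Fin n → EuclideanSpace ℝ (Fin d)) (b1 : Fin n → ℝ) (w2 : Fin n → ℝ)
    (hw1 : ∀ i, ‖w1 i‖ ≤ 1 / 2) (hb1 : ∀ i, |b1 i| ≤ 1 / 2) :
    ∃ (I : Finset (Fin n)) (w2' : Fin n → ℝ),
      (I.card : ℝ) ≤ (n : ℝ) / 100 ∧ (∀ i ∉ I, w2' i = 0) ∧
      Real.sqrt (∫ x, ((∑ i, w2 i * max 0 (⟪w1 i, x⟫ + b1 i))
          - ∑ i, w2' i * max 0 (⟪w1 i, x⟫ + b1 i)) ^ 2 ∂μ)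
        ≤ 15 * (∑ i, |w2 i|) / Real.sqrt n := by
  set relu : Fin n → EuclideanSpace ℝ (Fin d) → ℝ := fun i x => max 0 (⟪w1 i, x⟫ + b1 i)
  have hbound : ∀ i, ∀ᵐ x ∂μ, ‖relu i x‖ ≤ 1 := fun i => by
    filter_upwards [mem_ae_iff.2 hμ] with x hx
    exact abs_relu_le_one (hw1 i) (hb1 i) (mem_closedBall_zero_iff.1 hx)
  have hmem : ∀ i, MemLp (relu i) 2 μ := fun i =>
    MemLp.of_bound (by fun_prop : Continuous (relu i)).aestronglyMeasurable 1 (hbound i)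
  obtain ⟨I, w2', hcard, hsupp, hclose⟩ := exists_sparse_norm_sum_sub_sq_le w2
    (fun i => norm_toLp_le_of_ae_bound (hmem i) zero_le_one (hbound i))
    (Nat.div_pos hn (by norm_num : 0 < 100))
  refine ⟨I, w2', ?_, hsupp, ?_⟩
  · calc (I.card : ℝ) ≤ (n / 100 : ℕ) := by exact_mod_cast hcard
      _ ≤ n / 100 := Nat.cast_div_le
  · rw [integral_sq_sum_sub_sum_eq_norm_sq hmem, Real.sqrt_le_left (by positivity)]
    simpa using hclose.trans (sq_div_natDiv_hundred_le hn _)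
end

section
/- Let d, m ∈ ℕ and consider linear regression with noise: X a centered ℝ^d-valued random variable, Y = ⟨θ*, X⟩ + ν with ν centered, independent of X, with E[ν²] = 1. Given i.i.d. samples (X⁽ⁱ⁾)ᵢ₌₁^m, let Σ = Σᵢ X⁽ⁱ⁾(X⁽ⁱ⁾)ᵀ, Σ⁺ its Moore–Penrose pseudoinverse, and P = I_d − Σ⁺Σ the orthogonal projector onto ker Σ. Then the conditional excess risk of the minimum-norm interpolator f̂ = ⟨θ̂, ·⟩ (with θ̂ the minimum Euclidean norm empirical risk minimizer) satisfies E[R(f̂) | (X⁽ⁱ⁾)ᵢ] − R* = (θ*)ᵀ P E[XXᵀ] P θ* + Tr(Σ⁺ E[XXᵀ]). -/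
open MeasureTheory Matrix Finset

/-!
Since `Σ⁺Σθ* = θ* - Pθ*`, the estimation error is `θ̂ - θ* = -Pθ* + ∑ᵢ νᵢ Σ⁺x⁽ⁱ⁾`. As the test
noise is uncorrelated with `X`, the risk of `θ` is `R* + (θ - θ*)ᵀ E[XXᵀ] (θ - θ*)`. Averaging this
quadratic form over the centered, orthonormal training noise kills the cross terms and leaves the
bias `(Pθ*)ᵀ E[XXᵀ] Pθ*` plus the variance
`∑ᵢ (Σ⁺x⁽ⁱ⁾)ᵀ E[XXᵀ] Σ⁺x⁽ⁱ⁾ = Tr(E[XXᵀ] Σ⁺ΣΣ⁺ᵀ) = Tr(Σ⁺E[XXᵀ])`. The last step needs `Σ⁺` to be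
symmetric, which follows from the uniqueness of the Moore–Penrose inverse of the symmetric `Σ`.
-/

namespace Matrix

section MoorePenrose

variable {m n R : Type*} [Fintype m] [Fintype n] [CommRing R]

structure IsMoorePenroseInverse (A : Matrix m n R) (B : Matrix n m R) : Prop where
  penrose₁ : A * B * A = A
  penrose₂ : B * A * B = B
  penrose₃ : (A * B)ᵀ = A * B
  penrose₄ : (B * A)ᵀ = B * A

namespace IsMoorePenroseInverse

variable {A : Matrix m n R} {B C : Matrix n m R}

theorem transpose (h : IsMoorePenroseInverse A B) : IsMoorePenroseInverse Aᵀ Bᵀ where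
  penrose₁ := by
    simpa [transpose_mul, Matrix.mul_assoc] using congrArg Matrix.transpose h.penrose₁
  penrose₂ := by
    simpa [transpose_mul, Matrix.mul_assoc] using congrArg Matrix.transpose h.penrose₂
  penrose₃ := by rw [← transpose_mul, transpose_transpose, h.penrose₄]
  penrose₄ := by rw [← transpose_mul, transpose_transpose, h.penrose₃]

theorem unique (hB : IsMoorePenroseInverse A B) (hC : IsMoorePenroseInverse A C) : B = C := by
  have hB' : B = B * A * C := calc
    B = B * (A * B)ᵀ := by rw [hB.penrose₃, ← Matrix.mul_assoc, hB.penrose₂]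
    _ = B * Bᵀ * (A * C * A)ᵀ := by rw [hC.penrose₁, transpose_mul, Matrix.mul_assoc]
    _ = B * (A * B)ᵀ * (A * C)ᵀ := by simp only [transpose_mul, Matrix.mul_assoc]
    _ = B * A * C := by simp only [hB.penrose₃, hC.penrose₃, ← Matrix.mul_assoc, hB.penrose₂]
  have hC' : C = B * A * C := calc
    C = (C * A)ᵀ * C := by rw [hC.penrose₄, hC.penrose₂]
    _ = (A * B * A)ᵀ * Cᵀ * C := by rw [hB.penrose₁, transpose_mul]
    _ = (B * A)ᵀ * (C * A)ᵀ * C := by simp only [transpose_mul, Matrix.mul_assoc]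
    _ = B * A * C := by rw [hB.penrose₄, hC.penrose₄, Matrix.mul_assoc, hC.penrose₂]
  rw [hB', ← hC']

theorem transpose_eq_self {A B : Matrix n n R} (h : IsMoorePenroseInverse A B) (hA : Aᵀ = A) :
    Bᵀ = B :=
  (hA ▸ h.transpose).unique h

end IsMoorePenroseInverse

end MoorePenrose

section QuadraticForms

variable {m n ι R : Type*} [Fintype n] [Fintype ι] [CommRing R]

theorem sum_vecMulVec_self_mulVec (x : ι → n → R) (v : n → R) :
    (∑ i, vecMulVec (x i) (x i)) *ᵥ v = ∑ i, (x i ⬝ᵥ v) • x i := by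
  simp only [sum_mulVec, vecMulVec_mulVec, op_smul_eq_smul]

theorem vecMulVec_mulVec_self (A : Matrix m n R) (v : n → R) :
    vecMulVec (A *ᵥ v) (A *ᵥ v) = A * vecMulVec v v * Aᵀ := by
  rw [mul_vecMulVec, vecMulVec_mul, vecMul_transpose]

theorem sum_dotProduct_mulVec_self (A : Matrix n n R) (x : ι → n → R) :
    ∑ i, x i ⬝ᵥ A *ᵥ x i = trace (A * ∑ i, vecMulVec (x i) (x i)) := by
  simp only [mul_sum, trace_sum, mul_vecMulVec, trace_vecMulVec, dotProduct_comm (x _)]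

theorem dotProduct_mulVec_add_sum_smul (A : Matrix n n R) (c : n → R) (a : ι → R)
    (w : ι → n → R) :
    (c + ∑ i, a i • w i) ⬝ᵥ A *ᵥ (c + ∑ i, a i • w i) =
      c ⬝ᵥ A *ᵥ c + ∑ i, a i * (c ⬝ᵥ A *ᵥ w i + w i ⬝ᵥ A *ᵥ c) +
        ∑ i, ∑ j, a i * a j * (w i ⬝ᵥ A *ᵥ w j) := by
  simp only [mulVec_add, mulVec_sum, mulVec_smul, dotProduct_add, add_dotProduct,
    dotProduct_sum, sum_dotProduct, dotProduct_smul, smul_dotProduct, smul_eq_mul, mul_add,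
    sum_add_distrib, mul_sum]
  conv_rhs => rw [sum_comm]
  simp only [mul_left_comm (a _) (a _), mul_assoc]
  ring

end QuadraticForms

end Matrix

section SecondMoments

variable {Ω n ι : Type*} [MeasurableSpace Ω] {μ : Measure Ω} [Fintype n] [Fintype ι]

theorem integral_sq_dotProduct_sub {X : Ω → n → ℝ} {ε : Ω → ℝ}
    (hX : ∀ k, MemLp (fun ω => X ω k) 2 μ) (hε : MemLp ε 2 μ)
    (horth : ∀ k, ∫ ω, X ω k * ε ω ∂μ = 0) {M : Matrix n n ℝ}
    (hM : ∀ k l, M k l = ∫ ω, X ω k * X ω l ∂μ) (u : n → ℝ) :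
    ∫ ω, (u ⬝ᵥ X ω - ε ω) ^ 2 ∂μ = u ⬝ᵥ M *ᵥ u + ∫ ω, ε ω ^ 2 ∂μ := by
  have hXX : ∀ k l, Integrable (fun ω => X ω k * X ω l) μ :=
    fun k l => (hX k).integrable_mul (hX l)
  have hXε : ∀ k, Integrable (fun ω => X ω k * ε ω) μ := fun k => (hX k).integrable_mul hε
  have hexpand : ∀ ω, (u ⬝ᵥ X ω - ε ω) ^ 2 =
      ∑ k, ∑ l, u k * u l * (X ω k * X ω l) - 2 * ∑ k, u k * (X ω k * ε ω) + ε ω ^ 2 := by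
    intro ω
    have hsq : (u ⬝ᵥ X ω) * (u ⬝ᵥ X ω) = ∑ k, ∑ l, u k * u l * (X ω k * X ω l) := by
      rw [dotProduct, sum_mul_sum]
      exact sum_congr rfl fun k _ => sum_congr rfl fun l _ => by ring
    have hmul : (u ⬝ᵥ X ω) * ε ω = ∑ k, u k * (X ω k * ε ω) := by
      rw [dotProduct, sum_mul]
      exact sum_congr rfl fun k _ => by ring
    rw [← hsq, ← hmul]
    ring
  have hquad : Integrable (fun ω => ∑ k, ∑ l, u k * u l * (X ω k * X ω l)) μ :=
    integrable_finsetSum _ fun k _ => integrable_finsetSum _ fun l _ => (hXX k l).const_mul _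
  have hlin : Integrable (fun ω => ∑ k, u k * (X ω k * ε ω)) μ :=
    integrable_finsetSum _ fun k _ => (hXε k).const_mul _
  have hquad_int : ∫ ω, ∑ k, ∑ l, u k * u l * (X ω k * X ω l) ∂μ = u ⬝ᵥ M *ᵥ u := by
    rw [integral_finsetSum _ fun k _ => integrable_finsetSum _ fun l _ => (hXX k l).const_mul _]
    simp only [dotProduct, mulVec, mul_sum]
    refine sum_congr rfl fun k _ => ?_
    rw [integral_finsetSum _ fun l _ => (hXX k l).const_mul _]
    exact sum_congr rfl fun l _ => by rw [integral_const_mul, hM]; ring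
  have hlin_int : ∫ ω, ∑ k, u k * (X ω k * ε ω) ∂μ = 0 := by
    simp [integral_finsetSum _ fun k _ => (hXε k).const_mul _, integral_const_mul, horth]
  simp_rw [hexpand]
  rw [integral_add (hquad.sub (hlin.const_mul 2) : Integrable (fun ω => _ - _) μ)
    hε.integrable_sq, integral_sub hquad (hlin.const_mul 2), integral_const_mul, hquad_int,
    hlin_int, mul_zero, sub_zero]

variable [IsProbabilityMeasure μ] {ν : ι → Ω → ℝ}

theorem integrable_dotProduct_mulVec_add_sum_smul (hν : ∀ i, MemLp (ν i) 2 μ)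
    (A : Matrix n n ℝ) (c : n → ℝ) (w : ι → n → ℝ) :
    Integrable (fun ω => (c + ∑ i, ν i ω • w i) ⬝ᵥ A *ᵥ (c + ∑ i, ν i ω • w i)) μ := by
  simp_rw [dotProduct_mulVec_add_sum_smul]
  refine ((integrable_const _).add ?_).add ?_
  · exact integrable_finsetSum _ fun i _ => ((hν i).integrable one_le_two).mul_const _
  · exact integrable_finsetSum _ fun i _ => integrable_finsetSum _ fun j _ =>
      ((hν i).integrable_mul (hν j)).mul_const _

theorem integral_dotProduct_mulVec_add_sum_smul [DecidableEq ι] (hν : ∀ i, MemLp (ν i) 2 μ)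
    (hmean : ∀ i, ∫ ω, ν i ω ∂μ = 0)
    (hcov : ∀ i j, ∫ ω, ν i ω * ν j ω ∂μ = if i = j then 1 else 0)
    (A : Matrix n n ℝ) (c : n → ℝ) (w : ι → n → ℝ) :
    ∫ ω, (c + ∑ i, ν i ω • w i) ⬝ᵥ A *ᵥ (c + ∑ i, ν i ω • w i) ∂μ =
      c ⬝ᵥ A *ᵥ c + ∑ i, w i ⬝ᵥ A *ᵥ w i := by
  have hνν : ∀ i j, Integrable (fun ω => ν i ω * ν j ω) μ :=
    fun i j => (hν i).integrable_mul (hν j)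
  have hlin : Integrable (fun ω => ∑ i, ν i ω * (c ⬝ᵥ A *ᵥ w i + w i ⬝ᵥ A *ᵥ c)) μ :=
    integrable_finsetSum _ fun i _ => ((hν i).integrable one_le_two).mul_const _
  have hquad : Integrable (fun ω => ∑ i, ∑ j, ν i ω * ν j ω * (w i ⬝ᵥ A *ᵥ w j)) μ :=
    integrable_finsetSum _ fun i _ => integrable_finsetSum _ fun j _ => (hνν i j).mul_const _
  have hlin_int : ∫ ω, ∑ i, ν i ω * (c ⬝ᵥ A *ᵥ w i + w i ⬝ᵥ A *ᵥ c) ∂μ = 0 := by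
    simp [integral_finsetSum _ fun i _ => ((hν i).integrable one_le_two).mul_const _,
      integral_mul_const, hmean]
  have hquad_int :
      ∫ ω, ∑ i, ∑ j, ν i ω * ν j ω * (w i ⬝ᵥ A *ᵥ w j) ∂μ = ∑ i, w i ⬝ᵥ A *ᵥ w i := by
    rw [integral_finsetSum _ fun i _ => integrable_finsetSum _ fun j _ => (hνν i j).mul_const _]
    refine sum_congr rfl fun i _ => ?_
    simp [integral_finsetSum _ fun j _ => (hνν i j).mul_const _, integral_mul_const, hcov]
  simp_rw [dotProduct_mulVec_add_sum_smul]
  rw [integral_add ((integrable_const _).add hlin : Integrable (fun ω => _ + _) μ) hquad,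
    integral_add (integrable_const _) hlin, integral_const, hlin_int, hquad_int]
  simp

end SecondMoments

theorem min_norm_regression_bias_variance_general
    (d m : ℕ)
    {Ω : Type*} [MeasurableSpace Ω] (P : Measure Ω) [IsProbabilityMeasure P]
    {Ω' : Type*} [MeasurableSpace Ω'] (P' : Measure Ω')
    (θstar : Fin d → ℝ)
    (x : Fin m → Fin d → ℝ)
    (ν : Fin m → Ω → ℝ)
    (hνL2 : ∀ i, MemLp (ν i) 2 P)
    (hνmean : ∀ i, ∫ ω, ν i ω ∂P = 0)
    (hνcov : ∀ i j, (∫ ω, ν i ω * ν j ω ∂P) = if i = j then 1 else 0)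
    (X : Ω' → Fin d → ℝ)
    (hXL2 : ∀ k, MemLp (fun ω' => X ω' k) 2 P')
    (νt : Ω' → ℝ) (hνtL2 : MemLp νt 2 P')
    (hcross : ∀ k, ∫ ω', X ω' k * νt ω' ∂P' = 0)
    (Sig : Matrix (Fin d) (Fin d) ℝ) (hSig : Sig = ∑ i, vecMulVec (x i) (x i))
    (Sp : Matrix (Fin d) (Fin d) ℝ)
    (hSp1 : Sig * Sp * Sig = Sig) (hSp2 : Sp * Sig * Sp = Sp)
    (hSp3 : (Sig * Sp)ᵀ = Sig * Sp) (hSp4 : (Sp * Sig)ᵀ = Sp * Sig)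
    (Pker : Matrix (Fin d) (Fin d) ℝ) (hPker : Pker = 1 - Sp * Sig)
    (M : Matrix (Fin d) (Fin d) ℝ) (hM : ∀ k l, M k l = ∫ ω', X ω' k * X ω' l ∂P')
    (θhat : Ω → Fin d → ℝ)
    (hθhat : ∀ ω, θhat ω = Sp *ᵥ (∑ i, (x i ⬝ᵥ θstar + ν i ω) • x i))
    (R : (Fin d → ℝ) → ℝ)
    (hR : ∀ θ, R θ = ∫ ω', (θ ⬝ᵥ X ω' - (θstar ⬝ᵥ X ω' + νt ω')) ^ 2 ∂P')
    (Rstar : ℝ) (hRstar : Rstar = ∫ ω', (νt ω') ^ 2 ∂P') :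
    (∫ ω, R (θhat ω) ∂P) - Rstar
      = θstar ⬝ᵥ ((Pker * M * Pker) *ᵥ θstar) + (Sp * M).trace := by
  have hpinv : Sig.IsMoorePenroseInverse Sp := ⟨hSp1, hSp2, hSp3, hSp4⟩
  have hSigT : Sigᵀ = Sig := by simp [hSig, transpose_sum, transpose_vecMulVec]
  have hSpT : Spᵀ = Sp := hpinv.transpose_eq_self hSigT
  have hPkerT : Pkerᵀ = Pker := by rw [hPker, transpose_sub, transpose_one, hSp4]
  have herr : ∀ ω, θhat ω - θstar = -(Pker *ᵥ θstar) + ∑ i, ν i ω • (Sp *ᵥ x i) := by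
    intro ω
    rw [hθhat, hPker]
    simp only [add_smul, sum_add_distrib, ← sum_vecMulVec_self_mulVec, ← hSig, mulVec_add,
      mulVec_sum, mulVec_smul, mulVec_mulVec, sub_mulVec, one_mulVec]
    abel
  have hrisk : ∀ θ, R θ = (θ - θstar) ⬝ᵥ M *ᵥ (θ - θstar) + Rstar := by
    intro θ
    rw [hR, hRstar, ← integral_sq_dotProduct_sub hXL2 hνtL2 hcross hM]
    congr with ω
    rw [sub_dotProduct]
    ring
  have hbias : -(Pker *ᵥ θstar) ⬝ᵥ M *ᵥ -(Pker *ᵥ θstar) =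
      θstar ⬝ᵥ (Pker * M * Pker) *ᵥ θstar := by
    rw [neg_dotProduct, mulVec_neg, dotProduct_neg, neg_neg, ← mulVec_mulVec, ← mulVec_mulVec,
      dotProduct_mulVec θstar Pker, ← mulVec_transpose, hPkerT]
  have hvar : ∑ i, (Sp *ᵥ x i) ⬝ᵥ M *ᵥ (Sp *ᵥ x i) = (Sp * M).trace := by
    rw [sum_dotProduct_mulVec_self]
    simp_rw [vecMulVec_mulVec_self]
    rw [← sum_mul, ← mul_sum, ← hSig, hSpT, hSp2, trace_mul_comm]
  simp_rw [hrisk, herr]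
  rw [integral_add (integrable_dotProduct_mulVec_add_sum_smul hνL2 _ _ _) (integrable_const _),
    integral_dotProduct_mulVec_add_sum_smul hνL2 hνmean hνcov, integral_const, hbias, hvar]
  simp

/-- Bias–variance decomposition of the conditional excess risk of the minimum-norm
least-squares interpolator: conditionally on the design `x⁽¹⁾, …, x⁽ᵐ⁾`, with labels
`y⁽ⁱ⁾ = ⟨θ*, x⁽ⁱ⁾⟩ + νᵢ` for centered, unit-variance, uncorrelated noise `ν`, and with
`Σ⁺` the Moore–Penrose pseudoinverse of `Σ = Σᵢ x⁽ⁱ⁾(x⁽ⁱ⁾)ᵀ` (characterized by the four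
Penrose equations) and `P = I − Σ⁺Σ`, the minimum-norm estimator
`θ̂ = Σ⁺·Σᵢ y⁽ⁱ⁾x⁽ⁱ⁾` satisfies
`E[R(θ̂)] − R* = (θ*)ᵀ·P·E[XXᵀ]·P·θ* + Tr(Σ⁺·E[XXᵀ])`. -/
theorem min_norm_regression_bias_variance
    (d m : ℕ)
    {Ω : Type*} [MeasurableSpace Ω] (P : Measure Ω) [IsProbabilityMeasure P]
    {Ω' : Type*} [MeasurableSpace Ω'] (P' : Measure Ω') [IsProbabilityMeasure P']
    (θstar : Fin d → ℝ)
    (x : Fin m → Fin d → ℝ)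
    (ν : Fin m → Ω → ℝ)
    (hνL2 : ∀ i, MemLp (ν i) 2 P)
    (hνmean : ∀ i, ∫ ω, ν i ω ∂P = 0)
    (hνcov : ∀ i j, (∫ ω, ν i ω * ν j ω ∂P) = if i = j then 1 else 0)
    (X : Ω' → Fin d → ℝ)
    (hXL2 : ∀ k, MemLp (fun ω' => X ω' k) 2 P')
    (hXmean : ∀ k, ∫ ω', X ω' k ∂P' = 0)
    (νt : Ω' → ℝ) (hνtL2 : MemLp νt 2 P')
    (hνtmean : ∫ ω', νt ω' ∂P' = 0)
    (hνt2 : ∫ ω', (νt ω') ^ 2 ∂P' = 1)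
    (hcross : ∀ k, ∫ ω', X ω' k * νt ω' ∂P' = 0)
    (Sig : Matrix (Fin d) (Fin d) ℝ) (hSig : Sig = ∑ i, vecMulVec (x i) (x i))
    (Sp : Matrix (Fin d) (Fin d) ℝ)
    (hSp1 : Sig * Sp * Sig = Sig) (hSp2 : Sp * Sig * Sp = Sp)
    (hSp3 : (Sig * Sp)ᵀ = Sig * Sp) (hSp4 : (Sp * Sig)ᵀ = Sp * Sig)
    (Pker : Matrix (Fin d) (Fin d) ℝ) (hPker : Pker = 1 - Sp * Sig)
    (M : Matrix (Fin d) (Fin d) ℝ) (hM : ∀ k l, M k l = ∫ ω', X ω' k * X ω' l ∂P')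
    (θhat : Ω → Fin d → ℝ)
    (hθhat : ∀ ω, θhat ω = Sp *ᵥ (∑ i, (x i ⬝ᵥ θstar + ν i ω) • x i))
    (R : (Fin d → ℝ) → ℝ)
    (hR : ∀ θ, R θ = ∫ ω', (θ ⬝ᵥ X ω' - (θstar ⬝ᵥ X ω' + νt ω')) ^ 2 ∂P')
    (Rstar : ℝ) (hRstar : Rstar = ∫ ω', (νt ω') ^ 2 ∂P') :
    (∫ ω, R (θhat ω) ∂P) - Rstar
      = θstar ⬝ᵥ ((Pker * M * Pker) *ᵥ θstar) + (Sp * M).trace :=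
  min_norm_regression_bias_variance_general d m P P' θstar x ν hνL2 hνmean hνcov X hXL2 νt hνtL2
    hcross Sig hSig Sp hSp1 hSp2 hSp3 hSp4 Pker hPker M hM θhat hθhat R hR Rstar hRstar
end

section
/- Let r : ℝ^d → ℝ be differentiable, and suppose training data ((x⁽ⁱ⁾, y⁽ⁱ⁾))ᵢ₌₁^m with x⁽ⁱ⁾ ∈ ℝ^d, y⁽ⁱ⁾ ∈ {−1, 1} is linearly separable, i.e., there exists θ̂ ≠ 0 with y⁽ⁱ⁾⟨θ̂, x⁽ⁱ⁾⟩ > 0 for all i. Define the empirical exponential-loss risk r(θ) = (1/m)·Σᵢ exp(−y⁽ⁱ⁾⟨θ, x⁽ⁱ⁾⟩). Then r has no critical points: for every θ ∈ ℝ^d, ⟨θ̂, ∇r(θ)⟩ < 0, and in particular ∇r(θ) ≠ 0 and the infimum of r is not attained. -/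
open scoped RealInnerProductSpace

/-! The gradient of the exponential loss is `∑ᵢ -(yᵢ e^{-yᵢ⟨θ, xᵢ⟩}) xᵢ`, so pairing it with a
separator `θ̂` gives a sum of terms `-e^{…} · yᵢ⟨θ̂, xᵢ⟩`, each strictly negative. Likewise,
moving from `θ` in the direction `θ̂` strictly decreases every summand of the loss. -/

section Gradient

variable {𝕜 F : Type*} [RCLike 𝕜] [NormedAddCommGroup F] [InnerProductSpace 𝕜 F]
  [CompleteSpace F] {x : F}

theorem HasGradientAt.fun_sum {ι : Type*} {s : Finset ι} {f : ι → F → 𝕜} {g : ι → F}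
    (h : ∀ i ∈ s, HasGradientAt (f i) (g i) x) :
    HasGradientAt (fun y => ∑ i ∈ s, f i y) (∑ i ∈ s, g i) x := by
  rw [hasGradientAt_iff_hasFDerivAt, map_sum]
  exact HasFDerivAt.fun_sum h

end Gradient

section RealGradient

variable {F : Type*} [NormedAddCommGroup F] [InnerProductSpace ℝ F] [CompleteSpace F]
  {f : F → ℝ} {g x : F}

theorem HasGradientAt.const_mul (c : ℝ) (h : HasGradientAt f g x) :
    HasGradientAt (fun y => c * f y) (c • g) x := by
  rw [hasGradientAt_iff_hasFDerivAt, map_smul]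
  exact h.hasFDerivAt.const_mul c

theorem HasDerivAt.hasGradientAt_comp_inner {φ : ℝ → ℝ} {φ' : ℝ} (v : F)
    (h : HasDerivAt φ φ' ⟪x, v⟫) : HasGradientAt (fun y => φ ⟪y, v⟫) (φ' • v) x := by
  rw [hasGradientAt_iff_hasFDerivAt, map_smul]
  have hinner : HasFDerivAt (fun y => ⟪y, v⟫) (InnerProductSpace.toDual ℝ F v) x := by
    convert (innerSL ℝ v).hasFDerivAt (x := x) using 1
    · exact funext fun y => real_inner_comm v y
    · rfl
  exact h.comp_hasFDerivAt (f := fun y => ⟪y, v⟫) x hinner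

end RealGradient

section ExpLoss

variable {ι F : Type*} [Fintype ι] [NormedAddCommGroup F] [InnerProductSpace ℝ F]
  (x : ι → F) (y : ι → ℝ)

noncomputable def expLoss (θ : F) : ℝ :=
  ∑ i, Real.exp (-(y i * ⟪θ, x i⟫))

noncomputable def expLossGrad (θ : F) : F :=
  ∑ i, (-(y i * Real.exp (-(y i * ⟪θ, x i⟫)))) • x i

theorem hasGradientAt_expLoss [CompleteSpace F] (θ : F) :
    HasGradientAt (expLoss x y) (expLossGrad x y θ) θ := by
  refine HasGradientAt.fun_sum fun i _ => ?_
  have hφ := ((hasDerivAt_id ⟪θ, x i⟫).const_mul (y i)).neg.exp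
  simpa [mul_comm] using hφ.hasGradientAt_comp_inner (x i)

variable {x y} [Nonempty ι] {θhat : F}

theorem inner_expLossGrad_neg (hsep : ∀ i, 0 < y i * ⟪θhat, x i⟫) (θ : F) :
    ⟪θhat, expLossGrad x y θ⟫ < 0 := by
  rw [expLossGrad, inner_sum]
  refine Finset.sum_neg (fun i _ => ?_) Finset.univ_nonempty
  rw [real_inner_smul_right]
  nlinarith [hsep i, Real.exp_pos (-(y i * ⟪θ, x i⟫))]

theorem strictAnti_expLoss_add_smul (hsep : ∀ i, 0 < y i * ⟪θhat, x i⟫) (θ : F) :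
    StrictAnti fun t : ℝ => expLoss x y (θ + t • θhat) := by
  intro s t hst
  refine Finset.sum_lt_sum_of_nonempty Finset.univ_nonempty fun i _ => Real.exp_lt_exp.mpr ?_
  simp only [inner_add_left, real_inner_smul_left]
  nlinarith [hsep i]

end ExpLoss

theorem exp_loss_no_critical_points_general
    (d m : ℕ) (hm : 0 < m)
    (x : Fin m → EuclideanSpace ℝ (Fin d)) (y : Fin m → ℝ)
    (θhat : EuclideanSpace ℝ (Fin d))
    (hsep : ∀ i, 0 < y i * ⟪θhat, x i⟫)
    (r : EuclideanSpace ℝ (Fin d) → ℝ)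
    (hr : ∀ θ, r θ = (1 / m) * ∑ i, Real.exp (-(y i * ⟪θ, x i⟫))) :
    ∀ θ : EuclideanSpace ℝ (Fin d),
      ⟪θhat, gradient r θ⟫ < 0 ∧ gradient r θ ≠ 0 ∧ ∃ θ', r θ' < r θ := by
  intro θ
  have : Nonempty (Fin m) := ⟨⟨0, hm⟩⟩
  have hr' : r = fun θ => (1 / m : ℝ) * expLoss x y θ := funext hr
  have hgrad : gradient r θ = (1 / m : ℝ) • expLossGrad x y θ := by
    rw [hr']
    exact ((hasGradientAt_expLoss x y θ).const_mul _).gradient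
  have hinner : ⟪θhat, gradient r θ⟫ < 0 := by
    rw [hgrad, real_inner_smul_right]
    exact mul_neg_of_pos_of_neg (by positivity) (inner_expLossGrad_neg hsep θ)
  refine ⟨hinner, fun h => by simp [h] at hinner, θ + (1 : ℝ) • θhat, ?_⟩
  rw [hr']
  refine mul_lt_mul_of_pos_left ?_ (by positivity)
  simpa using strictAnti_expLoss_add_smul hsep θ zero_lt_one

/-- For linearly separable data, the empirical exponential-loss risk of a linear
classifier has no critical points: `⟨θ̂, ∇r(θ)⟩ < 0` for every `θ` (where `θ̂` is a
separator), hence `∇r(θ) ≠ 0`, and the infimum of `r` is not attained. -/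
theorem exp_loss_no_critical_points
    (d m : ℕ) (hm : 0 < m)
    (x : Fin m → EuclideanSpace ℝ (Fin d)) (y : Fin m → ℝ)
    (hy : ∀ i, y i = 1 ∨ y i = -1)
    (θhat : EuclideanSpace ℝ (Fin d)) (hθhat : θhat ≠ 0)
    (hsep : ∀ i, 0 < y i * ⟪θhat, x i⟫)
    (r : EuclideanSpace ℝ (Fin d) → ℝ)
    (hr : ∀ θ, r θ = (1 / m) * ∑ i, Real.exp (-(y i * ⟪θ, x i⟫))) :
    ∀ θ : EuclideanSpace ℝ (Fin d),
      ⟪θhat, gradient r θ⟫ < 0 ∧ gradient r θ ≠ 0 ∧ ∃ θ', r θ' < r θ :=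
  exp_loss_no_critical_points_general d m hm x y θhat hsep r hr
end
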